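/- Let K be a field, R = K[x_1, …, x_n], and let φ : K[x_1, …, x_n] → K[x_1, …, x_{n-1}] be the K-algebra homomorphism sending x_i ↦ x_i for i < n and x_n ↦ 0 (so φ is the quotient by the ideal (x_n)). Let I ⊆ R be an ideal. Then an element g ∈ K[x_1, …, x_{n-1}] is integral over the ideal φ(I + (x_n)) = generated image of I if and only if g = φ(f) for some f ∈ R integral over I + (x_n). Equivalently, the image under φ of the integral closure of (I, x_n) equals the integral closure of the image ideal (I, x_n)/(x_n). -/

import Mathlib

/-!
Setting the last variable to zero has the section `ψ = rename Fin.castSucc`, and its kernel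
`(x_{n+1})` lies in `J = I + (x_{n+1})`. Hence `ψ (φ J) ⊆ J`, so applying `ψ` to an equation of
integral dependence of `g` over `φ J` gives one of `ψ g` over `J`, with `φ (ψ g) = g`; conversely
`φ` carries equations over `J` to equations over `φ J`.
-/

open MvPolynomial

def IsIntegralOverIdeal {R : Type*} [CommRing R] (I : Ideal R) (r : R) : Prop :=
  ∃ k : ℕ, 1 ≤ k ∧ ∃ c : ℕ → R, (∀ j ∈ Finset.Icc 1 k, c j ∈ I ^ j) ∧
    r ^ k + ∑ j ∈ Finset.Icc 1 k, c j * r ^ (k - j) = 0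

namespace IsIntegralOverIdeal

variable {R S : Type*} [CommRing R] [CommRing S]

theorem mono {I J : Ideal R} (hIJ : I ≤ J) {r : R} (h : IsIntegralOverIdeal I r) :
    IsIntegralOverIdeal J r := by
  obtain ⟨k, hk, c, hc, heq⟩ := h
  exact ⟨k, hk, c, fun j hj => Ideal.pow_right_mono hIJ j (hc j hj), heq⟩

theorem map {F : Type*} [FunLike F R S] [RingHomClass F R S] (φ : F) {I : Ideal R} {r : R}
    (h : IsIntegralOverIdeal I r) : IsIntegralOverIdeal (I.map φ) (φ r) := by
  obtain ⟨k, hk, c, hc, heq⟩ := h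
  refine ⟨k, hk, fun j => φ (c j), fun j hj => ?_, ?_⟩
  · rw [← Ideal.map_pow]
    exact Ideal.mem_map_of_mem φ (hc j hj)
  · simpa [map_sum] using congrArg φ heq

end IsIntegralOverIdeal

theorem Ideal.map_map_le_of_rightInverse {R S F G : Type*} [CommRing R] [CommRing S]
    [FunLike F R S] [RingHomClass F R S] [FunLike G S R] [RingHomClass G S R]
    (φ : F) (ψ : G) (hψ : Function.RightInverse ψ φ) {J : Ideal R} (hJ : RingHom.ker φ ≤ J) :
    (J.map φ).map ψ ≤ J := by
  rw [Ideal.map_le_iff_le_comap, Ideal.map_le_iff_le_comap]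
  intro a ha
  have hker : ψ (φ a) - a ∈ RingHom.ker φ := by
    rw [RingHom.mem_ker, map_sub, hψ, sub_self]
  simpa using J.add_mem (hJ hker) ha

theorem isIntegralOverIdeal_map_iff_of_rightInverse {R S F G : Type*} [CommRing R] [CommRing S]
    [FunLike F R S] [RingHomClass F R S] [FunLike G S R] [RingHomClass G S R]
    (φ : F) (ψ : G) (hψ : Function.RightInverse ψ φ) {J : Ideal R} (hJ : RingHom.ker φ ≤ J)
    (g : S) :
    IsIntegralOverIdeal (J.map φ) g ↔ ∃ f, IsIntegralOverIdeal J f ∧ φ f = g := by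
  constructor
  · intro hg
    exact ⟨ψ g, ((hg.map ψ).mono (Ideal.map_map_le_of_rightInverse φ ψ hψ hJ)), hψ g⟩
  · rintro ⟨f, hf, rfl⟩
    exact hf.map φ

namespace MvPolynomial

variable {K : Type*} [CommRing K] {n : ℕ}

theorem aeval_lastCases_zero_rename_castSucc (p : MvPolynomial (Fin n) K) :
    aeval (Fin.lastCases (0 : MvPolynomial (Fin n) K) X) (rename Fin.castSucc p) = p := by
  have hX : (Fin.lastCases (0 : MvPolynomial (Fin n) K) X) ∘ Fin.castSucc = X := by
    funext j
    simp only [Function.comp_apply, Fin.lastCases_castSucc]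
  rw [aeval_rename, hX, aeval_X_left_apply]

theorem ker_aeval_lastCases_zero_le :
    RingHom.ker (aeval (Fin.lastCases (0 : MvPolynomial (Fin n) K) X)) ≤
      Ideal.span {(X (Fin.last n) : MvPolynomial (Fin (n + 1)) K)} := by
  intro p hp
  set J := Ideal.span {(X (Fin.last n) : MvPolynomial (Fin (n + 1)) K)}
  have hπ : (Ideal.Quotient.mkₐ K J).comp ((rename Fin.castSucc).comp
      (aeval (Fin.lastCases (0 : MvPolynomial (Fin n) K) X))) = Ideal.Quotient.mkₐ K J := by
    refine algHom_ext fun i => ?_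
    induction i using Fin.lastCases with
    | last => simp [J]
    | cast j => simp
  rw [← Ideal.Quotient.eq_zero_iff_mem, ← Ideal.Quotient.mkₐ_eq_mk K, ← hπ,
    AlgHom.comp_apply, AlgHom.comp_apply, RingHom.mem_ker.mp hp, map_zero, map_zero]

end MvPolynomial

/-- Let `φ : K[x_1,…,x_{n+1}] → K[x_1,…,x_n]` be the `K`-algebra map sending the
last variable to `0` and fixing the others (the quotient by `(x_{n+1})`).
For an ideal `I`, an element `g` of the target is integral over the image ideal
`φ(I + (x_{n+1}))` iff `g = φ(f)` for some `f` integral over `I + (x_{n+1})`;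
i.e. the image of the integral closure of `(I, x_{n+1})` is the integral closure
of `(I, x_{n+1})/(x_{n+1})`. -/
theorem integralClosure_image_setLastToZero {K : Type*} [Field K] (n : ℕ)
    (I : Ideal (MvPolynomial (Fin (n + 1)) K))
    (φ : MvPolynomial (Fin (n + 1)) K →ₐ[K] MvPolynomial (Fin n) K)
    (hφ : φ = aeval (fun i : Fin (n + 1) =>
      Fin.lastCases (0 : MvPolynomial (Fin n) K) (fun j => X j) i))
    (g : MvPolynomial (Fin n) K) :
    IsIntegralOverIdeal
        (Ideal.map φ (I + Ideal.span {X (Fin.last n)})) g ↔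
      ∃ f : MvPolynomial (Fin (n + 1)) K,
        IsIntegralOverIdeal (I + Ideal.span {X (Fin.last n)}) f ∧ φ f = g := by
  subst hφ
  exact isIntegralOverIdeal_map_iff_of_rightInverse _ (rename Fin.castSucc)
    aeval_lastCases_zero_rename_castSucc (ker_aeval_lastCases_zero_le.trans le_sup_right) g
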